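/- arXiv:2210.05723 — 15 statements merged into one kernel-verified Lean document; each statement's English description precedes it below -/
import Mathlib

section
/- Let n ≥ 1 and let γ_p : ℝⁿ → ℝ be the scoring function of a property p. Suppose that for all e, f ∈ ℝⁿ, γ_p((e+f)/2) > 0 holds if and only if γ_p(e) > 0 or γ_p(f) > 0 (the strict epistemic pooling principle for average pooling on all of ℝⁿ). Then either γ_p(e) > 0 for every e ∈ ℝⁿ, or γ_p(e) ≤ 0 for every e ∈ ℝⁿ. -/
/-! A strictly positive point `e` forces every `f` to be positive: `f` is the average of `e` and
its reflection `2f - e`. So positivity is all-or-nothing. -/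

theorem forall_or_forall_not_of_pool_iff_or {X : Type*} (pool : X → X → X) (P : X → Prop)
    (hsurj : ∀ e, Function.Surjective (pool e))
    (hpool : ∀ e f, P (pool e f) ↔ P e ∨ P f) :
    (∀ e, P e) ∨ ∀ e, ¬ P e := by
  by_cases hP : ∃ e, P e
  · obtain ⟨e, he⟩ := hP
    refine Or.inl fun f => ?_
    obtain ⟨g, rfl⟩ := hsurj e f
    exact (hpool e g).2 (Or.inl he)
  · exact Or.inr (not_exists.1 hP)

theorem surjective_add_div_two {ι K : Type*} [DivisionRing K] [NeZero (2 : K)] (e : ι → K) :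
    Function.Surjective fun g : ι → K => (e + g) / 2 :=
  fun f => ⟨f * 2 - e, funext fun i => by simp [mul_div_cancel_right₀ _ (two_ne_zero' K)]⟩

theorem avg_pooling_strict_trivial_on_univ_general (n : ℕ)
    (γ : (Fin n → ℝ) → ℝ)
    (hpool : ∀ e f : Fin n → ℝ, γ ((e + f) / 2) > 0 ↔ (γ e > 0 ∨ γ f > 0)) :
    (∀ e : Fin n → ℝ, γ e > 0) ∨ (∀ e : Fin n → ℝ, γ e ≤ 0) := by
  simpa only [not_lt] using
    forall_or_forall_not_of_pool_iff_or (fun e f => (e + f) / 2) (fun e => γ e > 0)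
      surjective_add_div_two hpool

/-- If the strict epistemic pooling principle holds for average pooling
on all of ℝⁿ, then either every embedding satisfies p, or none does. -/
theorem avg_pooling_strict_trivial_on_univ (n : ℕ) (hn : 1 ≤ n)
    (γ : (Fin n → ℝ) → ℝ)
    (hpool : ∀ e f : Fin n → ℝ, γ ((e + f) / 2) > 0 ↔ (γ e > 0 ∨ γ f > 0)) :
    (∀ e : Fin n → ℝ, γ e > 0) ∨ (∀ e : Fin n → ℝ, γ e ≤ 0) :=
  avg_pooling_strict_trivial_on_univ_general n γ hpool
end

section
/- Let X ⊆ ℝⁿ be convex and let γ_p : ℝⁿ → ℝ be a scoring function. Suppose the strict epistemic pooling principle holds for average pooling for all e, f ∈ X, i.e., for all e, f ∈ X, γ_p((e+f)/2) > 0 ↔ (γ_p(e) > 0 ∨ γ_p(f) > 0), and suppose there exists some e ∈ X with γ_p(e) > 0. Then the negative region Neg_p = {e ∈ X : γ_p(e) ≤ 0} is contained in the topological boundary of X; in particular Neg_p contains no interior point of X. -/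
/-- Key lemma: no interior point has nonpositive score. -/
theorem avg_pooling_key (n : ℕ) (X : Set (Fin n → ℝ))
    (hX : Convex ℝ X) (γ : (Fin n → ℝ) → ℝ)
    (hpool : ∀ e ∈ X, ∀ f ∈ X, γ ((e + f) / 2) > 0 ↔ (γ e > 0 ∨ γ f > 0))
    (hpos : ∃ e ∈ X, γ e > 0) :
    ∀ e ∈ X, γ e ≤ 0 → e ∉ interior X := by
  intro e he hneg hint
  obtain ⟨e₀, he₀, hγ₀⟩ := hpos
  -- a k = e + (1/2)^k • (e₀ - e), positive and in X
  set a : ℕ → (Fin n → ℝ) := fun k => e + ((2:ℝ)⁻¹)^k • (e₀ - e) with ha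
  have hXa : ∀ k, a k ∈ X ∧ γ (a k) > 0 := by
    intro k
    induction k with
    | zero =>
      simp only [ha, pow_zero, one_smul]
      constructor
      · convert he₀ using 1; abel
      · convert hγ₀ using 2; abel
    | succ k ih =>
      have key : a (k+1) = (e + a k) / 2 := by
        simp only [ha]
        funext i
        simp [Pi.add_apply, Pi.smul_apply, Pi.div_apply, pow_succ]
        ring
      constructor
      · rw [key]
        have := hX.add_smul_sub_mem he ih.1 (by norm_num : (1:ℝ)/2 ∈ Set.Icc (0:ℝ) 1)
        convert this using 1
        funext i
        simp [Pi.add_apply, Pi.div_apply, Pi.smul_apply]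
        ring
      · rw [key, hpool e he (a k) ih.1]
        exact Or.inr ih.2
  -- b k = e - (1/2)^k • (e₀ - e) tends to e, so eventually in X
  set b : ℕ → (Fin n → ℝ) := fun k => e - ((2:ℝ)⁻¹)^k • (e₀ - e) with hb
  have htend : Filter.Tendsto b Filter.atTop (nhds e) := by
    have h1 : Filter.Tendsto (fun k => ((2:ℝ)⁻¹)^k) Filter.atTop (nhds 0) :=
      tendsto_pow_atTop_nhds_zero_of_lt_one (by norm_num) (by norm_num)
    have h2 : Filter.Tendsto (fun k => ((2:ℝ)⁻¹)^k • (e₀ - e)) Filter.atTop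
        (nhds ((0:ℝ) • (e₀ - e))) := h1.smul_const _
    rw [zero_smul] at h2
    have := (tendsto_const_nhds (x := e) (f := Filter.atTop)).sub h2
    simpa [hb, inv_pow] using this
  have hev : ∀ᶠ k in Filter.atTop, b k ∈ X := by
    filter_upwards [htend.eventually (isOpen_interior.eventually_mem hint)] with k hk
    exact interior_subset hk
  obtain ⟨k, hk⟩ := hev.exists
  have hmid : (a k + b k) / 2 = e := by
    funext i
    simp [ha, hb, Pi.add_apply, Pi.div_apply, Pi.sub_apply, Pi.smul_apply]
    try ring
  have := (hpool (a k) (hXa k).1 (b k) hk).2 (Or.inl (hXa k).2)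
  rw [hmid] at this
  linarith

/-- Under the strict epistemic pooling principle for average pooling on a
convex set X, if some embedding in X satisfies p, then the negative region
Neg_p = {e ∈ X | γ_p(e) ≤ 0} is contained in the boundary of X; in particular it
contains no interior point of X. -/
theorem avg_pooling_neg_subset_boundary (n : ℕ) (X : Set (Fin n → ℝ))
    (hX : Convex ℝ X) (γ : (Fin n → ℝ) → ℝ)
    (hpool : ∀ e ∈ X, ∀ f ∈ X, γ ((e + f) / 2) > 0 ↔ (γ e > 0 ∨ γ f > 0))
    (hpos : ∃ e ∈ X, γ e > 0) :
    {e ∈ X | γ e ≤ 0} ⊆ closure X \ interior X ∧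
      ∀ e ∈ X, γ e ≤ 0 → e ∉ interior X := by
  have key := avg_pooling_key n X hX γ hpool hpos
  refine ⟨?_, key⟩
  rintro e ⟨he, hneg⟩
  exact ⟨subset_closure he, key e he hneg⟩
end

section
/- Let X ⊆ ℝⁿ be convex and let γ_p : ℝⁿ → ℝ be a scoring function. Suppose the strict epistemic pooling principle holds for average pooling for all e, f ∈ X, i.e., for all e, f ∈ X, γ_p((e+f)/2) > 0 ↔ (γ_p(e) > 0 ∨ γ_p(f) > 0). Then the positive region Pos_p = {e ∈ X : γ_p(e) > 0} is a convex set. -/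
/-!
If `z` lies in the half of a segment `[x, y]` next to `y`, then `2z - y ∈ [x, y]` and `z` is the
midpoint of `2z - y` and `y`; symmetrically near `x`. So when `X` is convex, every point of a
segment between two points of `Pos_p` is the average of one of them with a point of `X`, and the
pooling principle makes it positive.
-/

section

variable {𝕜 E : Type*} [Field 𝕜] [LinearOrder 𝕜] [IsStrictOrderedRing 𝕜]
  [AddCommGroup E] [Module 𝕜 E]

theorem exists_mem_segment_midpoint_eq {x y z : E} (hz : z ∈ segment 𝕜 x y) :
    ∃ w ∈ segment 𝕜 x y, z = midpoint 𝕜 x w ∨ z = midpoint 𝕜 w y := by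
  obtain ⟨a, b, ha, hb, hab, rfl⟩ := hz
  rcases le_total a b with hab_le | hba_le
  · refine ⟨(2 * a) • x + (b - a) • y,
      ⟨2 * a, b - a, by linarith, by linarith, by linarith, rfl⟩, Or.inr ?_⟩
    rw [midpoint_eq_smul_add, invOf_eq_inv]
    linear_combination (norm := module) hab • ((2 : 𝕜)⁻¹ • y)
  · refine ⟨(a - b) • x + (2 * b) • y,
      ⟨a - b, 2 * b, by linarith, by linarith, by linarith, rfl⟩, Or.inl ?_⟩
    rw [midpoint_eq_smul_add, invOf_eq_inv]
    linear_combination (norm := module) hab • ((2 : 𝕜)⁻¹ • x)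

theorem Convex.of_midpoint_mem {S X : Set E} (hX : Convex 𝕜 X) (hSX : S ⊆ X)
    (hS : ∀ x ∈ S, ∀ w ∈ X, midpoint 𝕜 x w ∈ S) : Convex 𝕜 S := by
  refine convex_iff_segment_subset.2 fun x hx y hy z hz ↦ ?_
  obtain ⟨w, hw, rfl | rfl⟩ := exists_mem_segment_midpoint_eq hz
  · exact hS x hx w (hX.segment_subset (hSX hx) (hSX hy) hw)
  · rw [midpoint_comm]
    exact hS y hy w (hX.segment_subset (hSX hx) (hSX hy) hw)

end

theorem Pi.add_div_two_eq_midpoint {ι 𝕜 : Type*} [Field 𝕜] [Invertible (2 : 𝕜)]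
    (e f : ι → 𝕜) : (e + f) / 2 = midpoint 𝕜 e f := by
  ext i
  simp only [div_apply, add_apply, ofNat_apply, pi_midpoint_apply, midpoint_eq_smul_add,
    invOf_eq_inv, smul_eq_mul]
  ring

/-- Under the strict epistemic pooling principle for average pooling on a
convex set X, the positive region Pos_p = {e ∈ X : γ_p(e) > 0} is convex. -/
theorem avg_pooling_pos_convex (n : ℕ) (X : Set (Fin n → ℝ))
    (hX : Convex ℝ X) (γ : (Fin n → ℝ) → ℝ)
    (hpool : ∀ e ∈ X, ∀ f ∈ X, γ ((e + f) / 2) > 0 ↔ (γ e > 0 ∨ γ f > 0)) :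
    Convex ℝ {e ∈ X | γ e > 0} := by
  refine hX.of_midpoint_mem (Set.sep_subset _ _) fun e ⟨he, hγe⟩ f hf ↦
    ⟨hX.midpoint_mem he hf, ?_⟩
  rw [← Pi.add_div_two_eq_midpoint]
  exact (hpool e he f hf).2 (Or.inl hγe)
end

section
/- Let X ⊆ ℝⁿ be convex and let γ_p : ℝⁿ → ℝ be a scoring function. Suppose the strict epistemic pooling principle holds for average pooling for all e, f ∈ X, i.e., for all e, f ∈ X, γ_p((e+f)/2) > 0 ↔ (γ_p(e) > 0 ∨ γ_p(f) > 0). Then the negative region Neg_p = {e ∈ X : γ_p(e) ≤ 0} is a convex set. -/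
open Set

section

variable {𝕜 E : Type*} [Field 𝕜] [LinearOrder 𝕜] [IsStrictOrderedRing 𝕜]
  [AddCommGroup E] [Module 𝕜 E]

/- If `b ∈ A`, then `b / 2 = midpoint 0 b` and hence `1 / 4 = midpoint (b / 2) ((1 - b) / 2)`
lie in `A`; but `1 / 4 = midpoint 0 (1 / 2)` and `1 / 2 = midpoint 0 1` avoid `A`. -/
theorem notMem_of_midpoint_mem_iff {A : Set 𝕜}
    (hA : ∀ s ∈ Icc (0 : 𝕜) 1, ∀ t ∈ Icc (0 : 𝕜) 1, midpoint 𝕜 s t ∈ A ↔ s ∈ A ∨ t ∈ A)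
    (h0 : (0 : 𝕜) ∉ A) (h1 : (1 : 𝕜) ∉ A) {b : 𝕜} (hb : b ∈ Icc (0 : 𝕜) 1) : b ∉ A := by
  intro hbA
  obtain ⟨hb0, hb1⟩ := hb
  have mid : ∀ s t : 𝕜, midpoint 𝕜 s t = (s + t) / 2 := fun s t => by
    rw [midpoint_eq_smul_add, smul_eq_mul, invOf_eq_inv, div_eq_inv_mul]
  have half : (1 / 2 : 𝕜) ∉ A := by
    have := (hA 0 (by simp) 1 (by simp)).not.mpr (by tauto)
    rwa [mid, zero_add] at this
  have half_b : b / 2 ∈ A := by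
    have := (hA 0 (by simp) b ⟨hb0, hb1⟩).mpr (Or.inr hbA)
    rwa [mid, zero_add] at this
  have quarter_mem : (1 / 4 : 𝕜) ∈ A := by
    have := (hA (b / 2) ⟨by linarith, by linarith⟩ ((1 - b) / 2) ⟨by linarith, by linarith⟩).mpr
      (Or.inl half_b)
    rwa [mid, show (b / 2 + (1 - b) / 2) / 2 = (1 / 4 : 𝕜) by ring] at this
  have quarter_notMem : (1 / 4 : 𝕜) ∉ A := by
    have := (hA 0 (by simp) (1 / 2) ⟨by norm_num, by norm_num⟩).not.mpr (by tauto)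
    rwa [mid, show (0 + 1 / 2) / 2 = (1 / 4 : 𝕜) by ring] at this
  exact quarter_notMem quarter_mem

theorem Convex.diff_of_midpoint_mem_iff {X P : Set E} (hX : Convex 𝕜 X)
    (hP : ∀ e ∈ X, ∀ f ∈ X, midpoint 𝕜 e f ∈ P ↔ e ∈ P ∨ f ∈ P) : Convex 𝕜 (X \ P) := by
  rw [convex_iff_segment_subset]
  rintro e ⟨he, heP⟩ f ⟨hf, hfP⟩ _ hx
  refine ⟨hX.segment_subset he hf hx, ?_⟩
  rw [segment_eq_image_lineMap] at hx
  obtain ⟨t, ht, rfl⟩ := hx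
  have line_mem : ∀ s ∈ Icc (0 : 𝕜) 1, AffineMap.lineMap e f s ∈ X := fun s hs =>
    hX.segment_subset he hf (by rw [segment_eq_image_lineMap]; exact mem_image_of_mem _ hs)
  refine notMem_of_midpoint_mem_iff (A := AffineMap.lineMap e f ⁻¹' P) (fun s hs u hu => ?_)
    (by simpa using heP) (by simpa using hfP) ht
  simp only [mem_preimage, AffineMap.map_midpoint]
  exact hP _ (line_mem s hs) _ (line_mem u hu)

end

/-- Under the strict epistemic pooling principle for average pooling on a
convex set X, the negative region Neg_p = {e ∈ X : γ_p(e) ≤ 0} is convex. -/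
theorem avg_pooling_neg_convex (n : ℕ) (X : Set (Fin n → ℝ))
    (hX : Convex ℝ X) (γ : (Fin n → ℝ) → ℝ)
    (hpool : ∀ e ∈ X, ∀ f ∈ X, γ ((e + f) / 2) > 0 ↔ (γ e > 0 ∨ γ f > 0)) :
    Convex ℝ {e ∈ X | γ e ≤ 0} := by
  have avg_eq_midpoint : ∀ e f : Fin n → ℝ, (e + f) / 2 = midpoint ℝ e f := fun e f => by
    ext i
    simp [midpoint_eq_smul_add, div_eq_inv_mul]
  have neg_eq : {e ∈ X | γ e ≤ 0} = X \ {e | 0 < γ e} := by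
    ext e
    simp
  rw [neg_eq]
  refine hX.diff_of_midpoint_mem_iff fun e he f hf => ?_
  simpa [avg_eq_midpoint] using hpool e he f hf
end

section
/- Let 𝒫 be a finite set of properties, X ⊆ ℝⁿ a convex set, and for each p ∈ 𝒫 let γ_p : ℝⁿ → ℝ be a scoring function. Suppose the strict epistemic pooling principle holds for average pooling for all e, f ∈ X (for every p ∈ 𝒫, γ_p((e+f)/2) > 0 ↔ γ_p(e) > 0 ∨ γ_p(f) > 0), and suppose every epistemic state is realized: for every subset Q ⊆ 𝒫 there exists e ∈ X with Γ(e) = Q, where Γ(e) = {p ∈ 𝒫 : γ_p(e) > 0}. Then n ≥ |𝒫|. -/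
/-!
For a single property `p`, the pooling principle makes positivity of `γ_p` absorbing along
segments: if `γ_p u > 0` then `γ_p > 0` on the whole segment `(v, u]`, by repeatedly pooling
with `u` or with `v` (a dyadic argument). Consequently both `{γ_p ≤ 0}` and `{∃ p ∈ J, γ_p > 0}`
are convex subsets of `X`. Now take `e₀ ∈ X` with empty state and `e_p ∈ X` with state `{p}`.
If these `|𝒫| + 1` points were affinely dependent, Radon's theorem would split them into two
parts with intersecting convex hulls. Let `J` be the properties indexing the part without `e₀`:
the common point lies in the hull of that part, hence has `γ_q > 0` for some `q ∈ J`, and in the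
hull of the other part, all of whose points have `γ_q ≤ 0`. So the points are affinely
independent, which forces `|𝒫| + 1 ≤ n + 1`.
-/

section

variable {E P : Type*} [AddCommGroup E] [Module ℝ E]

def StrictAvgPooling (X : Set E) (γ : E → ℝ) : Prop :=
  ∀ e ∈ X, ∀ f ∈ X, 0 < γ (midpoint ℝ e f) ↔ 0 < γ e ∨ 0 < γ f

namespace StrictAvgPooling

variable {X : Set E} {γ : E → ℝ}

theorem pos_combo_of_pos_left (h : StrictAvgPooling X γ) (hX : Convex ℝ X) {u v : E}
    (hu : u ∈ X) (hv : v ∈ X) (hγu : 0 < γ u) {a : ℝ} (ha₀ : 0 < a) (ha₁ : a ≤ 1) :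
    0 < γ (a • u + (1 - a) • v) := by
  suffices ∀ k : ℕ, ∀ a : ℝ, 0 < a → 1 ≤ 2 ^ k * a → a ≤ 1 → 0 < γ (a • u + (1 - a) • v) by
    obtain ⟨k, hk⟩ := pow_unbounded_of_one_lt a⁻¹ one_lt_two
    exact this k a ha₀ ((inv_lt_iff_one_lt_mul₀ ha₀).1 hk).le ha₁
  intro k
  induction k with
  | zero =>
    intro a _ hk ha₁
    obtain rfl : a = 1 := by linarith
    simpa using hγu
  | succ k ih =>
    intro a ha₀ hk ha₁
    rcases le_or_gt (2 * a) 1 with hle | hgt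
    · have hw : 0 < γ ((2 * a) • u + (1 - 2 * a) • v) :=
        ih (2 * a) (by linarith) (by rw [pow_succ] at hk; linarith) hle
      have hwX : (2 * a) • u + (1 - 2 * a) • v ∈ X :=
        hX hu hv (by linarith) (by linarith) (by ring)
      have hmid := (h _ hwX v hv).2 (Or.inl hw)
      rwa [midpoint_eq_smul_add, invOf_eq_inv, (by module :
        (2⁻¹ : ℝ) • ((2 * a) • u + (1 - 2 * a) • v + v) = a • u + (1 - a) • v)] at hmid
    · have hwX : (2 * a - 1) • u + (2 - 2 * a) • v ∈ X :=
        hX hu hv (by linarith) (by linarith) (by ring)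
      have hmid := (h u hu _ hwX).2 (Or.inl hγu)
      rwa [midpoint_eq_smul_add, invOf_eq_inv, (by module :
        (2⁻¹ : ℝ) • (u + ((2 * a - 1) • u + (2 - 2 * a) • v)) = a • u + (1 - a) • v)] at hmid

theorem convex_nonpos (h : StrictAvgPooling X γ) (hX : Convex ℝ X) :
    Convex ℝ {x ∈ X | γ x ≤ 0} := by
  rw [convex_iff_forall_pos]
  intro u hu v hv a b ha hb hab
  refine ⟨hX hu.1 hv.1 ha.le hb.le hab, ?_⟩
  by_contra! hz
  wlog hba : b ≤ a generalizing u v a b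
  · exact this hv hu hb ha (by linarith) (by rwa [add_comm]) (by linarith)
  have hmid : ¬ 0 < γ (midpoint ℝ u v) := by
    rw [h u hu.1 v hv.1]
    exact not_or.2 ⟨hu.2.not_gt, hv.2.not_gt⟩
  obtain rfl : b = 1 - a := by linarith
  refine hmid ?_
  -- as `a ≥ 1/2`, the midpoint of `u` and `v` lies between `v` and `a • u + (1 - a) • v`
  have hseg := h.pos_combo_of_pos_left hX (hX hu.1 hv.1 ha.le hb.le hab) hv.1 hz
    (a := (2 * a)⁻¹) (by positivity) (inv_le_one_of_one_le₀ (by linarith))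
  convert hseg using 2
  rw [midpoint_eq_smul_add, invOf_eq_inv]
  match_scalars
  · field_simp
  · field_simp
    ring

end StrictAvgPooling

variable {X : Set E} {γ : P → E → ℝ}

theorem convex_exists_pos (hX : Convex ℝ X) (hpool : ∀ p, StrictAvgPooling X (γ p)) (J : Set P) :
    Convex ℝ {x ∈ X | ∃ p ∈ J, 0 < γ p x} := by
  rw [convex_iff_forall_pos]
  rintro u ⟨hu, p, hp, hγu⟩ v hv a b ha hb hab
  obtain rfl : b = 1 - a := by linarith
  exact ⟨hX hu hv.1 ha.le hb.le hab, p, hp,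
    (hpool p).pos_combo_of_pos_left hX hu hv.1 hγu ha (by linarith)⟩

theorem affineIndependent_of_realizes_empty_and_singletons (hX : Convex ℝ X)
    (hpool : ∀ p, StrictAvgPooling X (γ p)) {e₀ : E} (he₀ : e₀ ∈ X) (hγe₀ : ∀ p, γ p e₀ ≤ 0)
    {e : P → E} (he : ∀ p, e p ∈ X) (hγe : ∀ p q, 0 < γ q (e p) ↔ q = p) :
    AffineIndependent ℝ (fun o : Option P => o.elim e₀ e) := by
  by_contra hdep
  obtain ⟨I, z, hzI, hzIc⟩ := Convex.radon_partition hdep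
  wlog hI : none ∉ I generalizing I
  · exact this Iᶜ hzIc (by rwa [compl_compl]) (by simpa using hI)
  obtain ⟨-, q, hq, hγz⟩ : z ∈ {x ∈ X | ∃ p ∈ {p | some p ∈ I}, 0 < γ p x} := by
    refine convexHull_min ?_ (convex_exists_pos hX hpool _) hzI
    rintro _ ⟨_ | p, hp, rfl⟩
    · exact absurd hp hI
    · exact ⟨he p, p, hp, (hγe p p).2 rfl⟩
  have hz : z ∈ {x ∈ X | γ q x ≤ 0} := by
    refine convexHull_min ?_ ((hpool q).convex_nonpos hX) hzIc
    rintro _ ⟨_ | p, hp, rfl⟩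
    · exact ⟨he₀, hγe₀ q⟩
    · exact ⟨he p, not_lt.1 fun h => hp ((hγe p q).1 h ▸ hq)⟩
  exact hz.2.not_gt hγz

end

/-- If the strict epistemic pooling principle holds for average pooling on
a convex set X ⊆ ℝⁿ for a finite set of properties 𝒫, and every epistemic state
Q ⊆ 𝒫 is realized by some embedding in X, then n ≥ |𝒫|. -/
theorem avg_pooling_dimension_bound (n : ℕ) (P : Type*) [Fintype P]
    (X : Set (Fin n → ℝ)) (hX : Convex ℝ X)
    (γ : P → (Fin n → ℝ) → ℝ)
    (hpool : ∀ e ∈ X, ∀ f ∈ X, ∀ p : P,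
      γ p ((e + f) / 2) > 0 ↔ (γ p e > 0 ∨ γ p f > 0))
    (hreal : ∀ Q : Set P, ∃ e ∈ X, ∀ p : P, γ p e > 0 ↔ p ∈ Q) :
    Fintype.card P ≤ n := by
  have hmid : ∀ e f : Fin n → ℝ, midpoint ℝ e f = (e + f) / 2 := fun e f => by
    rw [midpoint_eq_smul_add, invOf_eq_inv]
    ext i
    simp [div_eq_inv_mul]
  have hpool' : ∀ p, StrictAvgPooling X (γ p) := fun p e he f hf => by
    rw [hmid]
    exact hpool e he f hf p
  obtain ⟨e₀, he₀, hγe₀⟩ := hreal ∅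
  choose e he hγe using fun p : P => hreal {p}
  have hind := affineIndependent_of_realizes_empty_and_singletons hX hpool' he₀
    (fun p => not_lt.1 fun h => (hγe₀ p).1 h) he hγe
  have hcard : Fintype.card (Option P) ≤ Module.finrank ℝ (Fin n → ℝ) + 1 :=
    hind.card_le_finrank_succ.trans (Nat.add_le_add_right (Submodule.finrank_le _) 1)
  simpa using hcard
end

section
/- Let X ⊆ ℝⁿ be convex and let γ_p : ℝⁿ → ℝ be continuous. Suppose the weak epistemic pooling principle holds for average pooling for all e, f ∈ X, i.e., for all e, f ∈ X, γ_p((e+f)/2) ≥ 0 ↔ (γ_p(e) ≥ 0 ∨ γ_p(f) ≥ 0). Then either γ_p(e) ≥ 0 for every e ∈ X, or γ_p(e) < 0 for every e ∈ X. -/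
/-!
If some `e ∈ X` has `γ e ≥ 0`, averaging it repeatedly with a fixed `f ∈ X` keeps `γ ≥ 0` by
the pooling principle and stays in `X` by convexity, while the iterates converge to `f`.
Since `{γ ≥ 0}` is closed, `γ f ≥ 0`.
-/

open Filter Topology

section IterateMidpoint

variable {E : Type*} [AddCommGroup E] [Module ℝ E]

theorem iterate_midpoint_eq_lineMap (e f : E) (k : ℕ) :
    (midpoint ℝ · f)^[k] e = AffineMap.lineMap f e ((2⁻¹ : ℝ) ^ k) := by
  induction k with
  | zero => simp
  | succ k ih =>
    rw [Function.iterate_succ_apply', ih, midpoint_comm, midpoint, invOf_eq_inv,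
      AffineMap.lineMap_lineMap_right, pow_succ']

variable [TopologicalSpace E] [IsTopologicalAddGroup E] [ContinuousSMul ℝ E]

theorem tendsto_iterate_midpoint (e f : E) :
    Tendsto (fun k ↦ (midpoint ℝ · f)^[k] e) atTop (𝓝 f) := by
  simp_rw [iterate_midpoint_eq_lineMap]
  have hpow : Tendsto (fun k : ℕ ↦ (2⁻¹ : ℝ) ^ k) atTop (𝓝 0) :=
    tendsto_pow_atTop_nhds_zero_of_lt_one (by norm_num) (by norm_num)
  have hline := ((AffineMap.lineMap_continuous (p := f) (q := e)).tendsto 0).comp hpow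
  rwa [AffineMap.lineMap_apply_zero] at hline

theorem mem_closure_of_midpoint_mem {s : Set E} {e f : E} (he : e ∈ s)
    (hs : ∀ x ∈ s, midpoint ℝ x f ∈ s) : f ∈ closure s :=
  mem_closure_of_tendsto (tendsto_iterate_midpoint e f) <|
    Eventually.of_forall fun k ↦ Set.MapsTo.iterate hs k he

end IterateMidpoint

/-- If γ_p is continuous and the weak epistemic pooling principle holds for
average pooling on a convex set X, then either every e ∈ X weakly satisfies p, or
none does. -/
theorem avg_pooling_weak_continuous_trivial (n : ℕ) (X : Set (Fin n → ℝ))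
    (hX : Convex ℝ X) (γ : (Fin n → ℝ) → ℝ) (hcont : Continuous γ)
    (hpool : ∀ e ∈ X, ∀ f ∈ X, γ ((e + f) / 2) ≥ 0 ↔ (γ e ≥ 0 ∨ γ f ≥ 0)) :
    (∀ e ∈ X, γ e ≥ 0) ∨ (∀ e ∈ X, γ e < 0) := by
  refine or_iff_not_imp_left.2 fun hall e he ↦ ?_
  push Not at hall
  obtain ⟨f, hf, hγf⟩ := hall
  by_contra! hγe
  have hmid : ∀ x y : Fin n → ℝ, midpoint ℝ x y = (x + y) / 2 := fun x y ↦ by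
    ext i; simp [midpoint_eq_smul_add, div_eq_inv_mul]
  have hstep : ∀ x ∈ X ∩ {x | 0 ≤ γ x}, midpoint ℝ x f ∈ X ∩ {x | 0 ≤ γ x} :=
    fun x ⟨hxX, hγx⟩ ↦ ⟨hX.midpoint_mem hxX hf, hmid x f ▸ (hpool x hxX f hf).2 (.inl hγx)⟩
  have hclosure : closure (X ∩ {x | 0 ≤ γ x}) ⊆ {x | 0 ≤ γ x} :=
    closure_minimal Set.inter_subset_right (isClosed_le continuous_const hcont)
  exact (hclosure (mem_closure_of_midpoint_mem ⟨he, hγe⟩ hstep)).not_gt hγf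
end

section
/- Let n ≥ 1 and let γ_p : ℝⁿ → ℝ be the scoring function of a property p. Suppose that for all e, f ∈ ℝⁿ, γ_p(e + f) > 0 holds if and only if γ_p(e) > 0 or γ_p(f) > 0 (the strict epistemic pooling principle for summation pooling on all of ℝⁿ). Then either γ_p(e) > 0 for every e ∈ ℝⁿ, or γ_p(e) ≤ 0 for every e ∈ ℝⁿ. -/
theorem forall_or_forall_not_of_add_iff_or {G : Type*} [AddGroup G] {P : G → Prop}
    (hP : ∀ a b, P (a + b) ↔ P a ∨ P b) : (∀ a, P a) ∨ ∀ a, ¬ P a := by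
  by_cases h0 : P 0
  · exact .inl fun a => by simpa using (hP a 0).2 (.inr h0)
  · exact .inr fun a ha => h0 (by simpa using (hP a (-a)).2 (.inl ha))

theorem sum_pooling_strict_trivial_on_univ_general (n : ℕ)
    (γ : (Fin n → ℝ) → ℝ)
    (hpool : ∀ e f : Fin n → ℝ, γ (e + f) > 0 ↔ (γ e > 0 ∨ γ f > 0)) :
    (∀ e : Fin n → ℝ, γ e > 0) ∨ (∀ e : Fin n → ℝ, γ e ≤ 0) :=
  (forall_or_forall_not_of_add_iff_or hpool).imp_right fun h e => not_lt.1 (h e)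

/-- If the strict epistemic pooling principle holds for summation pooling
on all of ℝⁿ, then either every embedding satisfies p, or none does. -/
theorem sum_pooling_strict_trivial_on_univ (n : ℕ) (hn : 1 ≤ n)
    (γ : (Fin n → ℝ) → ℝ)
    (hpool : ∀ e f : Fin n → ℝ, γ (e + f) > 0 ↔ (γ e > 0 ∨ γ f > 0)) :
    (∀ e : Fin n → ℝ, γ e > 0) ∨ (∀ e : Fin n → ℝ, γ e ≤ 0) :=
  sum_pooling_strict_trivial_on_univ_general n γ hpool
end

section
/- Let X ⊆ ℝⁿ be conically closed, i.e., for all e, f ∈ X and all reals α, β ≥ 0 we have αe + βf ∈ X. Let γ_p : ℝⁿ → ℝ be a scoring function and suppose the strict epistemic pooling principle holds for summation pooling for all e, f ∈ X, i.e., for all e, f ∈ X, γ_p(e + f) > 0 ↔ (γ_p(e) > 0 ∨ γ_p(f) > 0). Then for every e ∈ X with γ_p(e) > 0 and every real λ > 0, it holds that γ_p(λe) > 0. -/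
/-!
Write `p` for the property `γ > 0`. Pooling `e` with any `f ∈ X` preserves `p e`, so `p (μ • e)`
holds for every `μ ≥ 1`, since `μ • e = (μ - 1) • e + e`. Conversely, splitting
`(k + 1) • x = k • x + x` shows that `p (k • x)` forces `p x` for every `k ≥ 1`. Given `l > 0`,
choose `k ≥ 1 / l`: then `k • (l • e)` has `p`, hence so does `l • e`.
-/

def IsConicallyClosed (𝕜 : Type*) {E : Type*} [Semiring 𝕜] [PartialOrder 𝕜] [AddCommMonoid E]
    [Module 𝕜 E] (X : Set E) : Prop :=
  ∀ e ∈ X, ∀ f ∈ X, ∀ α β : 𝕜, 0 ≤ α → 0 ≤ β → α • e + β • f ∈ X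

def StrictSumPooling {E : Type*} [Add E] (X : Set E) (p : E → Prop) : Prop :=
  ∀ e ∈ X, ∀ f ∈ X, p (e + f) ↔ p e ∨ p f

namespace IsConicallyClosed

variable {𝕜 E : Type*} [Semiring 𝕜] [PartialOrder 𝕜] [AddCommMonoid E] [Module 𝕜 E] {X : Set E}

theorem smul_mem (hX : IsConicallyClosed 𝕜 X) {e : E} (he : e ∈ X) {α : 𝕜} (hα : 0 ≤ α) :
    α • e ∈ X := by
  simpa using hX e he e he α 0 hα le_rfl

theorem add_mem [ZeroLEOneClass 𝕜] (hX : IsConicallyClosed 𝕜 X) {e f : E} (he : e ∈ X)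
    (hf : f ∈ X) : e + f ∈ X := by
  simpa using hX e he f hf 1 1 zero_le_one zero_le_one

end IsConicallyClosed

namespace StrictSumPooling

section AddMonoid

variable {E : Type*} [AddMonoid E] {X : Set E} {p : E → Prop}

theorem add_left (hpool : StrictSumPooling X p) {e f : E} (he : e ∈ X) (hf : f ∈ X) (h : p f) :
    p (e + f) :=
  (hpool e he f hf).2 (Or.inr h)

theorem of_nsmul (hpool : StrictSumPooling X p) (hadd : ∀ e ∈ X, ∀ f ∈ X, e + f ∈ X) {x : E}
    (hx : x ∈ X) {k : ℕ} (hk : 1 ≤ k) (h : p (k • x)) : p x := by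
  suffices ∀ k ≥ 1, k • x ∈ X ∧ (p (k • x) → p x) from (this k hk).2 h
  refine Nat.le_induction (by simpa using hx) fun k _ ⟨hkx, ih⟩ ↦ ⟨?_, fun hsucc ↦ ?_⟩
  · rw [succ_nsmul]
    exact hadd _ hkx _ hx
  · rw [succ_nsmul, hpool _ hkx _ hx] at hsucc
    exact hsucc.elim ih id

end AddMonoid

variable {𝕜 E : Type*} [Field 𝕜] [LinearOrder 𝕜] [IsStrictOrderedRing 𝕜]
  [AddCommGroup E] [Module 𝕜 E] {X : Set E} {p : E → Prop}

theorem smul_of_one_le (hX : IsConicallyClosed 𝕜 X) (hpool : StrictSumPooling X p) {e : E}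
    (he : e ∈ X) (h : p e) {μ : 𝕜} (hμ : 1 ≤ μ) : p (μ • e) := by
  have hsplit : μ • e = (μ - 1) • e + e := by rw [sub_smul, one_smul, sub_add_cancel]
  rw [hsplit]
  exact hpool.add_left (hX.smul_mem he (sub_nonneg.2 hμ)) he h

theorem smul_of_pos [Archimedean 𝕜] (hX : IsConicallyClosed 𝕜 X) (hpool : StrictSumPooling X p)
    {e : E} (he : e ∈ X) (h : p e) {l : 𝕜} (hl : 0 < l) : p (l • e) := by
  obtain ⟨k, hk⟩ := exists_nat_ge (1 / l)
  have hkl : (1 : 𝕜) ≤ k * l := by rwa [div_le_iff₀ hl] at hk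
  have hk_one : 1 ≤ k := Nat.one_le_iff_ne_zero.2 fun hk0 ↦ by norm_num [hk0] at hkl
  refine hpool.of_nsmul (fun _ hx _ hy ↦ hX.add_mem hx hy) (hX.smul_mem he hl.le) hk_one ?_
  rw [← Nat.cast_smul_eq_nsmul 𝕜, smul_smul]
  exact hpool.smul_of_one_le hX he h hkl

end StrictSumPooling

/-- On a conically closed set X, under the strict epistemic pooling
principle for summation pooling, scoring is invariant under positive scaling:
if γ_p(e) > 0 then γ_p(λ • e) > 0 for every λ > 0. -/
theorem sum_pooling_scaling_invariant (n : ℕ) (X : Set (Fin n → ℝ))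
    (hX : ∀ e ∈ X, ∀ f ∈ X, ∀ α β : ℝ, 0 ≤ α → 0 ≤ β → α • e + β • f ∈ X)
    (γ : (Fin n → ℝ) → ℝ)
    (hpool : ∀ e ∈ X, ∀ f ∈ X, γ (e + f) > 0 ↔ (γ e > 0 ∨ γ f > 0)) :
    ∀ e ∈ X, γ e > 0 → ∀ l : ℝ, 0 < l → γ (l • e) > 0 :=
  fun _ he h _ hl ↦ StrictSumPooling.smul_of_pos (p := fun v ↦ γ v > 0) hX hpool he h hl
end

section
/- Let X ⊆ ℝⁿ be conically closed, i.e., for all e, f ∈ X and all reals α, β ≥ 0 we have αe + βf ∈ X. Let 𝒫 be a set of properties with scoring functions γ_p : ℝⁿ → ℝ for p ∈ 𝒫. If the strict epistemic pooling principle holds for summation pooling for all e, f ∈ X (for every p ∈ 𝒫, γ_p(e + f) > 0 ↔ γ_p(e) > 0 ∨ γ_p(f) > 0), then the strict epistemic pooling principle also holds for average pooling for all e, f ∈ X (for every p ∈ 𝒫, γ_p((e+f)/2) > 0 ↔ γ_p(e) > 0 ∨ γ_p(f) > 0). -/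
/-!
Summation pooling applied to `e/2` and `f/2` gives average pooling of `e` and `f`, and
`e/2, f/2 ∈ X` by conic closure. It remains that halving does not change the sign pattern:
pooling `g/2` with itself gives `g`, so `γ p g > 0 ↔ γ p (g/2) > 0`.
-/

section Pooling

variable {E P : Type*}

def StrictPooling (pool : E → E → E) (X : Set E) (γ : P → E → ℝ) : Prop :=
  ∀ e ∈ X, ∀ f ∈ X, ∀ p, 0 < γ p (pool e f) ↔ 0 < γ p e ∨ 0 < γ p f

theorem StrictPooling.pos_add_self_iff [Add E] {X : Set E} {γ : P → E → ℝ}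
    (h : StrictPooling (· + ·) X γ) {x : E} (hx : x ∈ X) (p : P) :
    0 < γ p (x + x) ↔ 0 < γ p x :=
  (h x hx x hx p).trans or_self_iff

theorem StrictPooling.avg_of_add [AddCommMonoid E] [Module ℝ E] {X : Set E} {γ : P → E → ℝ}
    (h : StrictPooling (· + ·) X γ) (hX : ∀ e ∈ X, (2⁻¹ : ℝ) • e ∈ X) :
    StrictPooling (fun e f ↦ (2⁻¹ : ℝ) • (e + f)) X γ := by
  have half_pos_iff : ∀ g ∈ X, ∀ p, 0 < γ p ((2⁻¹ : ℝ) • g) ↔ 0 < γ p g := fun g hg p ↦ by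
    simpa only [← add_smul, ← two_mul, mul_inv_cancel₀ (two_ne_zero (α := ℝ)), one_smul] using
      (h.pos_add_self_iff (hX g hg) p).symm
  intro e he f hf p
  dsimp only
  rw [smul_add, h _ (hX e he) _ (hX f hf), half_pos_iff e he, half_pos_iff f hf]

end Pooling

/-- On a conically closed set X, if the strict epistemic pooling principle
holds for summation pooling (for every property p ∈ 𝒫), then it also holds for
average pooling. -/
theorem sum_pooling_implies_avg_pooling (n : ℕ) (P : Type*)
    (X : Set (Fin n → ℝ))
    (hX : ∀ e ∈ X, ∀ f ∈ X, ∀ α β : ℝ, 0 ≤ α → 0 ≤ β → α • e + β • f ∈ X)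
    (γ : P → (Fin n → ℝ) → ℝ)
    (hpool : ∀ e ∈ X, ∀ f ∈ X, ∀ p : P,
      γ p (e + f) > 0 ↔ (γ p e > 0 ∨ γ p f > 0)) :
    ∀ e ∈ X, ∀ f ∈ X, ∀ p : P,
      γ p ((e + f) / 2) > 0 ↔ (γ p e > 0 ∨ γ p f > 0) := by
  intro e he f hf p
  have half_mem : ∀ g ∈ X, (2⁻¹ : ℝ) • g ∈ X := fun g hg ↦ by
    simpa using hX g hg g hg 2⁻¹ 0 (by norm_num) le_rfl
  have avg_eq : (e + f) / 2 = (2⁻¹ : ℝ) • (e + f) := funext fun _ ↦ div_eq_inv_mul _ _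
  rw [avg_eq]
  exact StrictPooling.avg_of_add hpool half_mem e he f hf p
end

section
/- Let 𝒫 be a finite set of properties, let X = ℝⁿ or X = {x ∈ ℝⁿ : ∀ i, x_i ≤ z} for some z ∈ ℝ, and for each p ∈ 𝒫 let γ_p : ℝⁿ → ℝ be a scoring function. Suppose the strict epistemic pooling principle holds for componentwise max-pooling for all e, f ∈ X (for every p ∈ 𝒫, γ_p(max(e,f)) > 0 ↔ γ_p(e) > 0 ∨ γ_p(f) > 0), and suppose every epistemic state is realized: for every subset Q ⊆ 𝒫 there exists e ∈ X with Γ(e) = Q, where Γ(e) = {p ∈ 𝒫 : γ_p(e) > 0}. Then n ≥ |𝒫|. -/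
/-!
Let `Γ e` be the set of properties scored positively at `e`; pooling says `Γ (e ⊔ f) = Γ e ∪ Γ f`
on a sup-closed `X`. Let `E Q ∈ X` realize `Q`. For each `p`, the join of the `E {q}` with
`q ≠ p` (padded with `E ∅`) realizes `{p}ᶜ` and lies above every `E {q}`, `q ≠ p`, but not above
`E {p}`, since joining it with `E {p}` would add `p`. So some coordinate `i p` has
`E {q} (i p) < E {p} (i p)` for all `q ≠ p`, which makes `p ↦ i p` injective.
-/

open Finset

section Realization

variable {α P : Type*} [SemilatticeSup α] {X : Set α} {Γ : α → Set P}

theorem SupClosed.map_finsetSup'_of_map_sup (hX : SupClosed X)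
    (hΓ : ∀ a ∈ X, ∀ b ∈ X, Γ (a ⊔ b) = Γ a ∪ Γ b) {ι : Type*} {s : Finset ι}
    (hs : s.Nonempty) {e : ι → α} (he : ∀ i ∈ s, e i ∈ X) :
    Γ (s.sup' hs e) = ⋃ i ∈ s, Γ (e i) := by
  induction hs using Finset.Nonempty.cons_induction with
  | singleton i => simp
  | cons i s hi hs ih =>
    classical
    have hes : ∀ j ∈ s, e j ∈ X := fun j hj => he j (mem_cons_of_mem hj)
    rw [sup'_cons hs, hΓ _ (he i (mem_cons_self i s)) _ (hX.finsetSup'_mem hs hes), ih hes,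
      cons_eq_insert, set_biUnion_insert]

theorem SupClosed.exists_map_eq_and_le (hX : SupClosed X)
    (hΓ : ∀ a ∈ X, ∀ b ∈ X, Γ (a ⊔ b) = Γ a ∪ Γ b) [Fintype P] [Nonempty P]
    {E : Set P → α} (hEX : ∀ Q, E Q ∈ X) (hΓE : ∀ Q, Γ (E Q) = Q) (Q : Set P) :
    ∃ g ∈ X, Γ g = Q ∧ ∀ q ∈ Q, E {q} ≤ g := by
  -- `{q} ∩ Q = ∅` for `q ∉ Q`, which keeps the index set `univ` nonempty even when `Q = ∅`
  refine ⟨univ.sup' univ_nonempty fun q => E ({q} ∩ Q),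
    hX.finsetSup'_mem _ fun q _ => hEX _, ?_, fun q hq => ?_⟩
  · rw [hX.map_finsetSup'_of_map_sup hΓ _ fun q _ => hEX _]
    ext p
    simp [hΓE]
  · simpa [Set.singleton_inter_of_mem hq] using le_sup' (fun q => E ({q} ∩ Q)) (mem_univ q)

theorem not_le_of_notMem_map (hΓ : ∀ a ∈ X, ∀ b ∈ X, Γ (a ⊔ b) = Γ a ∪ Γ b) {a g : α}
    (ha : a ∈ X) (hg : g ∈ X) {p : P} (hpa : p ∈ Γ a) (hpg : p ∉ Γ g) : ¬ a ≤ g := by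
  intro hag
  apply hpg
  rw [← sup_eq_right.mpr hag, hΓ a ha g hg]
  exact Or.inl hpa

theorem Fintype.card_le_of_supClosed_of_map_sup {ι β : Type*} [Fintype ι] [LinearOrder β]
    [Fintype P] {X : Set (ι → β)} (hX : SupClosed X) {Γ : (ι → β) → Set P}
    (hΓ : ∀ a ∈ X, ∀ b ∈ X, Γ (a ⊔ b) = Γ a ∪ Γ b) (hreal : ∀ Q : Set P, ∃ e ∈ X, Γ e = Q) :
    Fintype.card P ≤ Fintype.card ι := by
  choose E hEX hΓE using hreal
  have hsep : ∀ p : P, ∃ i, ∀ q ≠ p, E {q} i < E {p} i := by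
    intro p
    have : Nonempty P := ⟨p⟩
    obtain ⟨g, hgX, hΓg, hEg⟩ := hX.exists_map_eq_and_le hΓ hEX hΓE {p}ᶜ
    have hnle := not_le_of_notMem_map hΓ (hEX {p}) hgX (p := p) (by simp [hΓE]) (by simp [hΓg])
    simp only [Pi.le_def, not_forall, not_le] at hnle
    obtain ⟨i, hi⟩ := hnle
    exact ⟨i, fun q hq => (hEg q hq i).trans_lt hi⟩
  choose i hi using hsep
  refine Fintype.card_le_of_injective i fun p q hpq => ?_
  by_contra hne
  have hqp := hi q p hne
  rw [← hpq] at hqp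
  exact (hi p q (Ne.symm hne)).not_gt hqp

end Realization

/-- If the strict epistemic pooling principle holds for max-pooling on
X = ℝⁿ or X = {x : ∀ i, x i ≤ z} for a finite set of properties 𝒫, and every
epistemic state Q ⊆ 𝒫 is realized by some embedding in X, then n ≥ |𝒫|. -/
theorem max_pooling_dimension_bound (n : ℕ) (P : Type*) [Fintype P]
    (X : Set (Fin n → ℝ))
    (hX : X = Set.univ ∨ ∃ z : ℝ, X = {x : Fin n → ℝ | ∀ i, x i ≤ z})
    (γ : P → (Fin n → ℝ) → ℝ)
    (hpool : ∀ e ∈ X, ∀ f ∈ X, ∀ p : P,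
      γ p (fun i => max (e i) (f i)) > 0 ↔ (γ p e > 0 ∨ γ p f > 0))
    (hreal : ∀ Q : Set P, ∃ e ∈ X, ∀ p : P, γ p e > 0 ↔ p ∈ Q) :
    Fintype.card P ≤ n := by
  have hXsup : SupClosed X := by
    rcases hX with rfl | ⟨z, rfl⟩
    · exact supClosed_univ
    · exact fun a ha b hb i => sup_le (ha i) (hb i)
  simpa using Fintype.card_le_of_supClosed_of_map_sup hXsup (Γ := fun e => {p | γ p e > 0})
    (fun a ha b hb => Set.ext (hpool a ha b hb))
    (fun Q => (hreal Q).imp fun e ⟨he, hΓ⟩ => ⟨he, Set.ext hΓ⟩)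
end

section
/- Let X = ℝⁿ or X = [0,∞)ⁿ, and let γ_p : ℝⁿ → ℝ be a scoring function such that the strict epistemic pooling principle holds for Hadamard (componentwise product) pooling for all e, f ∈ X, i.e., γ_p(e ⊙ f) > 0 ↔ (γ_p(e) > 0 ∨ γ_p(f) > 0), where (e ⊙ f)_i = e_i · f_i. Let e = (e_1,...,e_n) ∈ X satisfy γ_p(e) > 0, and let I = {i : e_i = 0}. Then every f ∈ X with f_i = 0 for all i ∈ I satisfies γ_p(f) > 0. -/
lemma Pi.mul_div_cancel_of_imp' {ι G : Type*} [CommGroupWithZero G] {e f : ι → G}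
    (h : ∀ i, e i = 0 → f i = 0) : e * (f / e) = f :=
  funext fun i => _root_.mul_div_cancel_of_imp' (h i)

lemma div_mem_of_eq_univ_or_nonneg {ι : Type*} {X : Set (ι → ℝ)}
    (hX : X = Set.univ ∨ X = {x : ι → ℝ | ∀ i, 0 ≤ x i}) {e f : ι → ℝ}
    (he : e ∈ X) (hf : f ∈ X) : f / e ∈ X := by
  rcases hX with rfl | rfl
  · exact Set.mem_univ _
  · exact fun i => div_nonneg (hf i) (he i)

/-- For Hadamard pooling with X = ℝⁿ or X = [0,∞)ⁿ, under the strict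
epistemic pooling principle, if γ_p(e) > 0 and I = {i : e i = 0}, then every f ∈ X
vanishing on all coordinates of I satisfies γ_p(f) > 0. -/
theorem had_pooling_zero_pattern (n : ℕ) (X : Set (Fin n → ℝ))
    (hX : X = Set.univ ∨ X = {x : Fin n → ℝ | ∀ i, 0 ≤ x i})
    (γ : (Fin n → ℝ) → ℝ)
    (hpool : ∀ e ∈ X, ∀ f ∈ X,
      γ (fun i => e i * f i) > 0 ↔ (γ e > 0 ∨ γ f > 0)) :
    ∀ e ∈ X, γ e > 0 →
      ∀ f ∈ X, (∀ i, e i = 0 → f i = 0) → γ f > 0 := by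
  intro e he hγe f hf hvan
  -- `f / e` is `0` on the zero set of `e` (as `0 / 0 = 0`), so `e ⊙ (f / e) = f` there too.
  have hpooled := (hpool e he (f / e) (div_mem_of_eq_univ_or_nonneg hX he hf)).2 (Or.inl hγe)
  rwa [show (fun i => e i * (f / e) i) = f from Pi.mul_div_cancel_of_imp' hvan] at hpooled
end

section
/- Let X = ℝⁿ or X = [0,∞)ⁿ, let 𝒫 be a set of properties with scoring functions γ_p : ℝⁿ → ℝ, and suppose the strict epistemic pooling principle holds for Hadamard (componentwise product) pooling for all e, f ∈ X (for every p ∈ 𝒫, γ_p(e ⊙ f) > 0 ↔ γ_p(e) > 0 ∨ γ_p(f) > 0). For an index set I ⊆ {1,...,n}, define 𝒫_I = {p ∈ 𝒫 : every f ∈ X with f_i = 0 for all i ∈ I satisfies γ_p(f) > 0}. Then for all index sets I, J ⊆ {1,...,n}, it holds that 𝒫_{I ∪ J} = 𝒫_I ∪ 𝒫_J. -/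
/-!
A property lies in `𝒫_{I ∪ J}` as soon as it lies in `𝒫_I` or `𝒫_J`, since a vector vanishing on
`I ∪ J` vanishes on both. Conversely, if `p` fails on some `f ∈ X` vanishing on `I` and on some
`g ∈ X` vanishing on `J`, then the Hadamard product `f ⊙ g` lies in `X` and vanishes on `I ∪ J`,
while the pooling principle says `p` fails on it as well.
-/

section VanishingProperties

variable {ι R P : Type*}

/-- The paper's `𝒫_I`. -/
def vanishingProperties [Zero R] (X : Set (ι → R)) (γ : P → (ι → R) → ℝ) (I : Set ι) : Set P :=
  {p | ∀ f ∈ X, (∀ i ∈ I, f i = 0) → γ p f > 0}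

theorem vanishingProperties_mono [Zero R] (X : Set (ι → R)) (γ : P → (ι → R) → ℝ) :
    Monotone (vanishingProperties X γ) :=
  fun _ _ hIJ _ hp f hf hvan => hp f hf fun i hi => hvan i (hIJ hi)

theorem mul_apply_eq_zero_of_mem_union [MulZeroClass R] {I J : Set ι} {f g : ι → R}
    (hf : ∀ i ∈ I, f i = 0) (hg : ∀ i ∈ J, g i = 0) : ∀ i ∈ I ∪ J, (f * g) i = 0
  | i, .inl hi => by simp [hf i hi]
  | i, .inr hi => by simp [hg i hi]

theorem vanishingProperties_union_subset [MulZeroClass R] {X : Set (ι → R)}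
    {γ : P → (ι → R) → ℝ} (hmul : ∀ e ∈ X, ∀ f ∈ X, e * f ∈ X)
    (hpool : ∀ e ∈ X, ∀ f ∈ X, ∀ p, γ p (e * f) > 0 → γ p e > 0 ∨ γ p f > 0) (I J : Set ι) :
    vanishingProperties X γ (I ∪ J) ⊆ vanishingProperties X γ I ∪ vanishingProperties X γ J := by
  intro p hp
  by_contra hnot
  obtain ⟨hI, hJ⟩ := not_or.mp hnot
  simp only [vanishingProperties, Set.mem_ofPred_eq, not_forall, not_lt] at hI hJ
  obtain ⟨f, hfX, hfI, hf⟩ := hI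
  obtain ⟨g, hgX, hgJ, hg⟩ := hJ
  have hfg := hp (f * g) (hmul f hfX g hgX) (mul_apply_eq_zero_of_mem_union hfI hgJ)
  rcases hpool f hfX g hgX p hfg with hf' | hg'
  · exact hf.not_gt hf'
  · exact hg.not_gt hg'

theorem vanishingProperties_union [MulZeroClass R] {X : Set (ι → R)}
    {γ : P → (ι → R) → ℝ} (hmul : ∀ e ∈ X, ∀ f ∈ X, e * f ∈ X)
    (hpool : ∀ e ∈ X, ∀ f ∈ X, ∀ p, γ p (e * f) > 0 → γ p e > 0 ∨ γ p f > 0) (I J : Set ι) :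
    vanishingProperties X γ (I ∪ J) = vanishingProperties X γ I ∪ vanishingProperties X γ J :=
  (vanishingProperties_union_subset hmul hpool I J).antisymm <|
    Set.union_subset (vanishingProperties_mono X γ Set.subset_union_left)
      (vanishingProperties_mono X γ Set.subset_union_right)

end VanishingProperties

theorem mul_mem_of_eq_univ_or_nonneg {ι R : Type*} [MulZeroClass R] [Preorder R] [PosMulMono R]
    {X : Set (ι → R)} (hX : X = Set.univ ∨ X = {x | ∀ i, 0 ≤ x i}) :
    ∀ e ∈ X, ∀ f ∈ X, e * f ∈ X := by
  rcases hX with rfl | rfl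
  · exact fun _ _ _ _ => trivial
  · exact fun e he f hf i => mul_nonneg (he i) (hf i)

/-- For Hadamard pooling with X = ℝⁿ or X = [0,∞)ⁿ satisfying the strict
epistemic pooling principle, the map I ↦ 𝒫_I (with
𝒫_I = {p : every f ∈ X vanishing on I satisfies γ_p(f) > 0}) turns unions of index
sets into unions: 𝒫_{I ∪ J} = 𝒫_I ∪ 𝒫_J. -/
theorem had_pooling_index_union (n : ℕ) (P : Type*) (X : Set (Fin n → ℝ))
    (hX : X = Set.univ ∨ X = {x : Fin n → ℝ | ∀ i, 0 ≤ x i})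
    (γ : P → (Fin n → ℝ) → ℝ)
    (hpool : ∀ e ∈ X, ∀ f ∈ X, ∀ p : P,
      γ p (fun i => e i * f i) > 0 ↔ (γ p e > 0 ∨ γ p f > 0)) :
    ∀ I J : Set (Fin n),
      {p : P | ∀ f ∈ X, (∀ i ∈ I ∪ J, f i = 0) → γ p f > 0}
        = {p : P | ∀ f ∈ X, (∀ i ∈ I, f i = 0) → γ p f > 0}
          ∪ {p : P | ∀ f ∈ X, (∀ i ∈ J, f i = 0) → γ p f > 0} :=
  vanishingProperties_union (mul_mem_of_eq_univ_or_nonneg hX)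
    (fun e he f hf p => (hpool e he f hf p).mp)
end

section
/- Let 𝒫 be a finite set of properties, let X = ℝⁿ or X = [0,∞)ⁿ, and for each p ∈ 𝒫 let γ_p : ℝⁿ → ℝ be a scoring function. Suppose the strict epistemic pooling principle holds for Hadamard (componentwise product) pooling for all e, f ∈ X (for every p ∈ 𝒫, γ_p(e ⊙ f) > 0 ↔ γ_p(e) > 0 ∨ γ_p(f) > 0), and suppose every epistemic state is realized: for every subset Q ⊆ 𝒫 there exists e ∈ X with Γ(e) = Q, where Γ(e) = {p ∈ 𝒫 : γ_p(e) > 0}. Then n ≥ |𝒫|. -/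
/-!
On the nonnegative orthant the positivity of a score survives multiplication by any nonnegative
vector, and a nonnegative `e` is the Hadamard product of a nonnegative `e'` with `e / e'` as soon
as both have the same support. Hence the epistemic state of a nonnegative embedding depends only
on its support, a subset of `Fin n`. Realized states can be taken nonnegative (replace `e` by
`e ⊙ e`, whose state is that of `e` by the pooling principle), so the `2 ^ |𝒫|` states inject into
the `2 ^ n` supports.
-/

open Function

universe u v

variable {ι : Type u} {P : Type v}

def strictState (γ : P → (ι → ℝ) → ℝ) (e : ι → ℝ) : Set P := {p | 0 < γ p e}

section NonnegOrthant

variable {γ : P → (ι → ℝ) → ℝ}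
  (hmul : ∀ e f : ι → ℝ, 0 ≤ e → 0 ≤ f → ∀ p, 0 < γ p e → 0 < γ p (e * f))
include hmul

theorem strictState_subset_of_support_eq {e e' : ι → ℝ} (he : 0 ≤ e) (he' : 0 ≤ e')
    (hsupp : support e = support e') : strictState γ e' ⊆ strictState γ e := by
  have hfactor : e = e' * (e / e') := by
    funext i
    by_cases hi : e' i = 0
    · have : e i = 0 := by simpa [hi] using congrArg (i ∈ ·) hsupp
      simp [hi, this]
    · simp [mul_div_cancel₀ _ hi]
  intro p hp
  rw [strictState, Set.mem_ofPred_eq, hfactor]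
  exact hmul e' (e / e') he' (fun i => div_nonneg (he i) (he' i)) p hp

theorem strictState_eq_of_support_eq {e e' : ι → ℝ} (he : 0 ≤ e) (he' : 0 ≤ e')
    (hsupp : support e = support e') : strictState γ e = strictState γ e' :=
  (strictState_subset_of_support_eq hmul he' he hsupp.symm).antisymm
    (strictState_subset_of_support_eq hmul he he' hsupp)

theorem card_le_card_of_forall_strictState_eq [Fintype P] [Fintype ι]
    (hreal : ∀ Q : Set P, ∃ e : ι → ℝ, 0 ≤ e ∧ strictState γ e = Q) :
    Fintype.card P ≤ Fintype.card ι := by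
  classical
  choose E hE_nonneg hE_state using hreal
  have hinj : Injective fun Q => support (E Q) := fun Q Q' hsupp => by
    rw [← hE_state Q, ← hE_state Q']
    exact strictState_eq_of_support_eq hmul (hE_nonneg Q) (hE_nonneg Q') hsupp
  have hpow := Fintype.card_le_of_injective _ hinj
  rw [Fintype.card_set, Fintype.card_set] at hpow
  exact (Nat.pow_le_pow_iff_right (by norm_num)).mp hpow

end NonnegOrthant

/-- If the strict epistemic pooling principle holds for Hadamard pooling
on X = ℝⁿ or X = [0,∞)ⁿ for a finite set of properties 𝒫, and every epistemic
state Q ⊆ 𝒫 is realized by some embedding in X, then n ≥ |𝒫|. -/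
theorem had_pooling_dimension_bound (n : ℕ) (P : Type*) [Fintype P]
    (X : Set (Fin n → ℝ))
    (hX : X = Set.univ ∨ X = {x : Fin n → ℝ | ∀ i, 0 ≤ x i})
    (γ : P → (Fin n → ℝ) → ℝ)
    (hpool : ∀ e ∈ X, ∀ f ∈ X, ∀ p : P,
      γ p (fun i => e i * f i) > 0 ↔ (γ p e > 0 ∨ γ p f > 0))
    (hreal : ∀ Q : Set P, ∃ e ∈ X, ∀ p : P, γ p e > 0 ↔ p ∈ Q) :
    Fintype.card P ≤ n := by
  have hmem : ∀ v : Fin n → ℝ, 0 ≤ v → v ∈ X := by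
    rcases hX with rfl | rfl
    exacts [fun v _ => Set.mem_univ v, fun v hv => hv]
  have hmul : ∀ e f : Fin n → ℝ, 0 ≤ e → 0 ≤ f → ∀ p, 0 < γ p e → 0 < γ p (e * f) :=
    fun e f he hf p hp => (hpool e (hmem e he) f (hmem f hf) p).mpr (Or.inl hp)
  have hreal_nonneg : ∀ Q : Set P, ∃ e : Fin n → ℝ, 0 ≤ e ∧ strictState γ e = Q := by
    intro Q
    obtain ⟨e, heX, hQ⟩ := hreal Q
    refine ⟨e * e, fun i => mul_self_nonneg (e i), Set.ext fun p => ?_⟩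
    exact ((hpool e heX e heX p).trans or_self_iff).trans (hQ p)
  simpa using card_le_card_of_forall_strictState_eq hmul hreal_nonneg
end

section
/- Let 𝒫 be a finite set of properties, X ⊆ ℝⁿ a convex set, and for each p ∈ 𝒫 let γ_p : ℝⁿ → ℝ be a scoring function. Suppose every epistemic state is realized: for every subset Q' ⊆ 𝒫 there exists e ∈ X with Γ(e) = Q', where Γ(e) = {p ∈ 𝒫 : γ_p(e) > 0}. Let Q = {p_1,...,p_k} be a nonempty subset of 𝒫 and let γ_Q : ℝⁿ → ℝ be such that for all e ∈ X, γ_Q(e) > 0 ↔ (γ_p(e) > 0 for every p ∈ Q). If γ_Q and every γ_p with p ∈ Q are affine functions (each of the form x ↦ ⟨w, x⟩ + b for some w ∈ ℝⁿ and b ∈ ℝ), then |Q| = 1. -/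
/-!
Take `p ≠ q` in `Q`. Realized states give points `a`, `b`, `c` of `X` where every score in `Q`
is positive except `γ_q` at `a` and `γ_p` at `b`. Along `[a, c]` the affine score `γ_q` has a
zero `z`, where `γ_p > 0`, so `γ_Q(z) ≤ 0`; symmetrically along `[b, c]` there is `z'` with
`γ_p(z') = 0 < γ_q(z')` and `γ_Q(z') ≤ 0`. At the midpoint of `z` and `z'` every score in `Q` is
positive while the affine `γ_Q` is still `≤ 0`, contradicting the joint-scoring property.
-/

open Set

section LinearOrderedField

variable {𝕜 E : Type*} [Field 𝕜] [LinearOrder 𝕜] [IsStrictOrderedRing 𝕜]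
  [AddCommGroup E] [Module 𝕜 E]

theorem AffineMap.exists_mem_segment_eq (g : E →ᵃ[𝕜] 𝕜) {u v : E} {r : 𝕜}
    (hu : g u ≤ r) (hv : r ≤ g v) : ∃ z ∈ segment 𝕜 u v, g z = r :=
  show r ∈ g '' segment 𝕜 u v by
    rw [image_segment, segment_eq_Icc (hu.trans hv)]
    exact ⟨hu, hv⟩

theorem AffineMap.pos_of_mem_segment (f : E →ᵃ[𝕜] 𝕜) {u v z : E}
    (hu : 0 < f u) (hv : 0 < f v) (hz : z ∈ segment 𝕜 u v) : 0 < f z :=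
  ((convex_Ioi 0).affine_preimage f).segment_subset hu hv hz

theorem not_forall_pos_iff_and_pos {S : Set E} (hS : Convex 𝕜 S) (f g h : E →ᵃ[𝕜] 𝕜)
    {a b c : E} (ha : a ∈ S) (hb : b ∈ S) (hc : c ∈ S)
    (hfa : 0 < f a) (hga : g a ≤ 0) (hfb : f b ≤ 0) (hgb : 0 < g b)
    (hfc : 0 < f c) (hgc : 0 < g c) :
    ¬ ∀ x ∈ S, 0 < h x ↔ 0 < f x ∧ 0 < g x := by
  intro hfgh
  obtain ⟨z, hz, hgz⟩ := g.exists_mem_segment_eq hga hgc.le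
  obtain ⟨z', hz', hfz'⟩ := f.exists_mem_segment_eq hfb hfc.le
  have hzS := hS.segment_subset ha hc hz
  have hz'S := hS.segment_subset hb hc hz'
  have hfz : 0 < f z := f.pos_of_mem_segment hfa hfc hz
  have hgz' : 0 < g z' := g.pos_of_mem_segment hgb hgc hz'
  have hhz : h z ≤ 0 := le_of_not_gt fun hpos => ((hfgh z hzS).1 hpos).2.ne' hgz
  have hhz' : h z' ≤ 0 := le_of_not_gt fun hpos => ((hfgh z' hz'S).1 hpos).1.ne' hfz'
  have hhalf : (1 / 2 : 𝕜) + 1 / 2 = 1 := add_halves 1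
  have hw := (hfgh _ (hS hzS hz'S (by norm_num) (by norm_num) hhalf)).2
  simp only [Convex.combo_affine_apply hhalf, smul_eq_mul, hgz, hfz'] at hw
  have := hw ⟨by positivity, by positivity⟩
  linarith

theorem card_le_one_of_pos_iff_forall_pos {ι : Type*} {S : Set E} (hS : Convex 𝕜 S)
    {f : ι → E → 𝕜} {h : E → 𝕜} {Q : Finset ι}
    (hf : ∀ i ∈ Q, ∃ F : E →ᵃ[𝕜] 𝕜, ⇑F = f i) (hh : ∃ H : E →ᵃ[𝕜] 𝕜, ⇑H = h)
    (hjoint : ∀ x ∈ S, 0 < h x ↔ ∀ i ∈ Q, 0 < f i x)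
    (hreal : ∀ J : Set ι, ∃ e ∈ S, ∀ i ∈ Q, 0 < f i e ↔ i ∈ J) :
    Q.card ≤ 1 := by
  classical
  obtain ⟨H, rfl⟩ := hh
  refine Finset.card_le_one.2 fun p hp q hq => by_contra fun hpq => ?_
  obtain ⟨F, hF⟩ := hf p hp
  obtain ⟨G, hG⟩ := hf q hq
  -- Where the scores outside `{p, q}` are positive, `h` is a joint score for `p` and `q` alone.
  set R := (Q.erase p).erase q
  have hR : ∀ r ∈ R, r ≠ q ∧ r ≠ p ∧ r ∈ Q := fun r hr =>
    ⟨(Finset.mem_erase.1 hr).1, Finset.mem_erase.1 (Finset.mem_erase.1 hr).2⟩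
  have hQR : Q = insert p (insert q R) := by
    rw [Finset.insert_erase (Finset.mem_erase.2 ⟨Ne.symm hpq, hq⟩), Finset.insert_erase hp]
  have hSR : Convex 𝕜 (S ∩ ⋂ r ∈ R, {x | 0 < f r x}) := by
    refine hS.inter (convex_iInter₂ fun r hr => ?_)
    obtain ⟨Γ, hΓ⟩ := hf r (hR r hr).2.2
    exact hΓ ▸ (convex_Ioi 0).affine_preimage Γ
  obtain ⟨a, haS, ha⟩ := hreal {q}ᶜ
  obtain ⟨b, hbS, hb⟩ := hreal {p}ᶜ
  obtain ⟨c, hcS, hc⟩ := hreal univ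
  refine not_forall_pos_iff_and_pos hSR F G H
    ⟨haS, mem_iInter₂.2 fun r hr => (ha r (hR r hr).2.2).2 (hR r hr).1⟩
    ⟨hbS, mem_iInter₂.2 fun r hr => (hb r (hR r hr).2.2).2 (hR r hr).2.1⟩
    ⟨hcS, mem_iInter₂.2 fun r hr => (hc r (hR r hr).2.2).2 (mem_univ _)⟩
    (hF ▸ (ha p hp).2 hpq) (hG ▸ not_lt.1 fun h => (ha q hq).1 h rfl)
    (hF ▸ not_lt.1 fun h => (hb p hp).1 h rfl) (hG ▸ (hb q hq).2 (Ne.symm hpq))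
    (hF ▸ (hc p hp).2 (mem_univ _)) (hG ▸ (hc q hq).2 (mem_univ _)) fun x ⟨hxS, hxR⟩ => ?_
  rw [hjoint x hxS, hQR, hF, hG]
  simp only [Finset.forall_mem_insert]
  exact ⟨fun h => ⟨h.1, h.2.1⟩, fun h => ⟨h.1, h.2, mem_iInter₂.1 hxR⟩⟩

end LinearOrderedField

theorem exists_affineMap_eq_sum {n : ℕ} {γ : (Fin n → ℝ) → ℝ}
    (h : ∃ (w : Fin n → ℝ) (b : ℝ), ∀ x, γ x = (∑ i, w i * x i) + b) :
    ∃ F : (Fin n → ℝ) →ᵃ[ℝ] ℝ, ⇑F = γ := by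
  obtain ⟨w, b, hγ⟩ := h
  refine ⟨(dotProductBilin ℝ ℝ w).toAffineMap + AffineMap.const ℝ _ b, funext fun x => ?_⟩
  simp [hγ, dotProduct]

theorem strict_linear_joint_scoring_trivial_general (n : ℕ) (P : Type*)
    (X : Set (Fin n → ℝ)) (hX : Convex ℝ X)
    (γ : P → (Fin n → ℝ) → ℝ)
    (hreal : ∀ Q' : Set P, ∃ e ∈ X, ∀ p : P, γ p e > 0 ↔ p ∈ Q')
    (Q : Finset P) (hQ : Q.Nonempty)
    (γQ : (Fin n → ℝ) → ℝ)
    (hlink : ∀ e ∈ X, γQ e > 0 ↔ ∀ p ∈ Q, γ p e > 0)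
    (haffQ : ∃ (w : Fin n → ℝ) (b : ℝ), ∀ x, γQ x = (∑ i, w i * x i) + b)
    (haffp : ∀ p ∈ Q, ∃ (w : Fin n → ℝ) (b : ℝ), ∀ x, γ p x = (∑ i, w i * x i) + b) :
    Q.card = 1 :=
  le_antisymm
    (card_le_one_of_pos_iff_forall_pos hX (fun p hp => exists_affineMap_eq_sum (haffp p hp))
      (exists_affineMap_eq_sum haffQ) hlink
      fun J => (hreal J).imp fun _ ⟨he, hJ⟩ => ⟨he, fun p _ => hJ p⟩)
    hQ.card_pos

/-- Under the strict semantics, on a convex set X where every epistemic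
state is realized, if a joint scoring function γ_Q for a nonempty Q ⊆ 𝒫 and all the
scoring functions γ_p with p ∈ Q are affine, then |Q| = 1. -/
theorem strict_linear_joint_scoring_trivial (n : ℕ) (P : Type*) [Fintype P]
    (X : Set (Fin n → ℝ)) (hX : Convex ℝ X)
    (γ : P → (Fin n → ℝ) → ℝ)
    (hreal : ∀ Q' : Set P, ∃ e ∈ X, ∀ p : P, γ p e > 0 ↔ p ∈ Q')
    (Q : Finset P) (hQ : Q.Nonempty)
    (γQ : (Fin n → ℝ) → ℝ)
    (hlink : ∀ e ∈ X, γQ e > 0 ↔ ∀ p ∈ Q, γ p e > 0)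
    (haffQ : ∃ (w : Fin n → ℝ) (b : ℝ), ∀ x, γQ x = (∑ i, w i * x i) + b)
    (haffp : ∀ p ∈ Q, ∃ (w : Fin n → ℝ) (b : ℝ), ∀ x, γ p x = (∑ i, w i * x i) + b) :
    Q.card = 1 :=
  strict_linear_joint_scoring_trivial_general n P X hX γ hreal Q hQ γQ hlink haffQ haffp
end

section
/- Let 𝒫 be a finite set of properties with scoring functions γ_p : ℝⁿ → ℝ. Suppose the weak epistemic pooling principle holds for componentwise max-pooling for all e, f ∈ ℝⁿ (for every p ∈ 𝒫, γ_p(max(e,f)) ≥ 0 ↔ γ_p(e) ≥ 0 ∨ γ_p(f) ≥ 0), and suppose every weak epistemic state is realized: for every subset Q' ⊆ 𝒫 there exists e ∈ ℝⁿ with Γ'(e) = Q', where Γ'(e) = {p ∈ 𝒫 : γ_p(e) ≥ 0}. Let Q = {p_1,...,p_k} be a nonempty subset of 𝒫 and let γ_Q : ℝⁿ → ℝ be such that for all e ∈ ℝⁿ, γ_Q(e) ≥ 0 ↔ (γ_p(e) ≥ 0 for every p ∈ Q). If γ_Q and every γ_p with p ∈ Q are affine functions (each of the form x ↦ ⟨w,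 x⟩ + b for some w ∈ ℝⁿ and b ∈ ℝ), then |Q| = 1. -/
/-!
Suppose `p ≠ q` both lie in `Q`. Max-pooling makes every set `{γ_r ≥ 0}` an upper set, and
an affine function whose nonnegativity set is a nonempty upper set has nonnegative weights.
Realize a state `e` containing every property except `q`. Above `e` every `γ_r` with `r ≠ q`
is nonnegative, so there `γ_Q ≥ 0 ↔ γ_q ≥ 0`. Two affine functions with nonnegative weights,
negative at `e`, that agree in sign on the orthant above `e` are positive multiples of each
other, so `γ_Q ≥ 0 ↔ γ_q ≥ 0` everywhere. This fails at a realized state containing `q` but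
not `p`.
-/

open Matrix

theorem isUpperSet_of_max_mem {ι α : Type*} [LinearOrder α] {S : Set (ι → α)}
    (h : ∀ e ∈ S, ∀ f : ι → α, (fun i => max (e i) (f i)) ∈ S) : IsUpperSet S := by
  intro x y hxy hx
  have hmax : (fun i => max (x i) (y i)) = y := funext fun i => max_eq_right (hxy i)
  exact hmax ▸ h x hx y

/-- `A * V ≤ B * W` says that the root `-B / V` of `t ↦ B + t * V` is at most the root `-A / W`
of `t ↦ A + t * W`. -/
theorem mul_le_mul_of_forall_nonneg_imp_nonneg {A B W V : ℝ} (hA : A < 0) (hW : 0 ≤ W)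
    (hV : 0 ≤ V) (h : ∀ t, 0 ≤ t → 0 ≤ A + t * W → 0 ≤ B + t * V) : A * V ≤ B * W := by
  rcases hW.eq_or_lt with rfl | hWpos
  · nlinarith
  · have hroot : 0 ≤ B + -A / W * V :=
      h _ (div_nonneg (by linarith) hWpos.le) (by rw [div_mul_cancel₀ _ hWpos.ne', add_neg_cancel])
    have := mul_nonneg hroot hWpos.le
    field_simp at this
    linarith

section Affine

variable {ι : Type*} [DecidableEq ι]

theorem le_add_smul_single (x : ι → ℝ) (j : ι) {t : ℝ} (ht : 0 ≤ t) :
    x ≤ x + t • Pi.single j 1 :=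
  le_add_of_nonneg_right (smul_nonneg ht (Pi.single_nonneg.2 zero_le_one))

variable [Fintype ι]

theorem dotProduct_add_smul_single (w x : ι → ℝ) (j : ι) (t : ℝ) :
    w ⬝ᵥ (x + t • Pi.single j 1) = w ⬝ᵥ x + t * w j := by
  rw [dotProduct_add, dotProduct_smul, dotProduct_single, mul_one, smul_eq_mul]

theorem nonneg_of_isUpperSet_setOf_nonneg {g : (ι → ℝ) → ℝ} {w : ι → ℝ} {b : ℝ}
    (hg : ∀ x, g x = w ⬝ᵥ x + b) (hup : IsUpperSet {x | 0 ≤ g x}) (hne : ∃ z, 0 ≤ g z) :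
    0 ≤ w := by
  obtain ⟨z, hz⟩ := hne
  intro j
  show 0 ≤ w j
  by_contra! hwj
  set t := (g z + 1) / -w j
  have ht : 0 ≤ t := div_nonneg (by linarith) (by linarith)
  have htw : t * w j = -(g z + 1) := by
    have := hwj.ne; simp only [t]; field_simp
  have hmem : 0 ≤ g (z + t • Pi.single j 1) := hup (le_add_smul_single z j ht) hz
  rw [hg, dotProduct_add_smul_single, add_right_comm, ← hg] at hmem
  linarith

theorem nonneg_iff_of_forall_le_nonneg_iff {g h : (ι → ℝ) → ℝ} {w v : ι → ℝ} {b c : ℝ}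
    (hg : ∀ x, g x = w ⬝ᵥ x + b) (hh : ∀ x, h x = v ⬝ᵥ x + c) (hw : 0 ≤ w) (hv : 0 ≤ v)
    {e : ι → ℝ} (hge : g e < 0) (hhe : h e < 0) (hle : ∀ y, e ≤ y → (0 ≤ g y ↔ 0 ≤ h y))
    (x : ι → ℝ) : 0 ≤ g x ↔ 0 ≤ h x := by
  have hray : ∀ j t, 0 ≤ t → (0 ≤ g e + t * w j ↔ 0 ≤ h e + t * v j) := by
    intro j t ht
    have := hle _ (le_add_smul_single e j ht)
    rwa [hg, hh, dotProduct_add_smul_single, dotProduct_add_smul_single, add_right_comm,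
      add_right_comm (v ⬝ᵥ e), ← hg, ← hh] at this
  have hprop : h e • w = g e • v := by
    ext j
    simp only [Pi.smul_apply, smul_eq_mul]
    exact le_antisymm
      (mul_le_mul_of_forall_nonneg_imp_nonneg hhe (hv j) (hw j) fun t ht => (hray j t ht).2)
      (mul_le_mul_of_forall_nonneg_imp_nonneg hge (hw j) (hv j) fun t ht => (hray j t ht).1)
  have hdot : ∀ y, h e * (w ⬝ᵥ y) = g e * (v ⬝ᵥ y) := fun y => by
    rw [← smul_eq_mul, ← smul_dotProduct, hprop, smul_dotProduct, smul_eq_mul]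
  have hscale : h e * g x = g e * h x := by
    rw [hg x, hh x]
    linear_combination hdot x - hdot e - h e * hg e + g e * hh e
  constructor <;> intro <;> nlinarith

end Affine

/-- Under the weak semantics with max-pooling on all of ℝⁿ, where the
weak epistemic pooling principle holds and every weak epistemic state is realized,
if a joint scoring function γ_Q for a nonempty Q ⊆ 𝒫 and all the scoring functions
γ_p with p ∈ Q are affine, then |Q| = 1. -/
theorem max_pooling_weak_linear_joint_scoring_trivial (n : ℕ) (P : Type*) [Fintype P]
    (γ : P → (Fin n → ℝ) → ℝ)
    (hpool : ∀ e f : Fin n → ℝ, ∀ p : P,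
      γ p (fun i => max (e i) (f i)) ≥ 0 ↔ (γ p e ≥ 0 ∨ γ p f ≥ 0))
    (hreal : ∀ Q' : Set P, ∃ e : Fin n → ℝ, ∀ p : P, γ p e ≥ 0 ↔ p ∈ Q')
    (Q : Finset P) (hQ : Q.Nonempty)
    (γQ : (Fin n → ℝ) → ℝ)
    (hlink : ∀ e : Fin n → ℝ, γQ e ≥ 0 ↔ ∀ p ∈ Q, γ p e ≥ 0)
    (haffQ : ∃ (w : Fin n → ℝ) (b : ℝ), ∀ x, γQ x = (∑ i, w i * x i) + b)
    (haffp : ∀ p ∈ Q, ∃ (w : Fin n → ℝ) (b : ℝ), ∀ x, γ p x = (∑ i, w i * x i) + b) :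
    Q.card = 1 := by
  by_contra hcard
  obtain ⟨p, hp, q, hq, hpq⟩ := (Finset.one_lt_card (s := Q)).1 (by have := hQ.card_pos; omega)
  obtain ⟨w, b, hγQ⟩ := haffQ
  obtain ⟨v, c, hγq⟩ := haffp q hq
  obtain ⟨z, hz⟩ := hreal Set.univ
  obtain ⟨e, he⟩ := hreal {q}ᶜ
  obtain ⟨f, hf⟩ := hreal {p}ᶜ
  simp only [Set.mem_univ, iff_true] at hz he hf
  have hup : ∀ r, IsUpperSet {x | 0 ≤ γ r x} := fun r =>
    isUpperSet_of_max_mem fun x hx y => (hpool x y r).2 (Or.inl hx)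
  have hupQ : IsUpperSet {x | 0 ≤ γQ x} := fun x y hxy hx =>
    (hlink y).2 fun r hr => hup r hxy ((hlink x).1 hx r hr)
  have hw := nonneg_of_isUpperSet_setOf_nonneg hγQ hupQ ⟨z, (hlink z).2 fun r _ => hz r⟩
  have hv := nonneg_of_isUpperSet_setOf_nonneg hγq (hup q) ⟨z, hz q⟩
  have hqe : γ q e < 0 := lt_of_not_ge fun h => (he q).1 h rfl
  have hQe : γQ e < 0 := lt_of_not_ge fun h => hqe.not_ge ((hlink e).1 h q hq)
  have habove : ∀ y, e ≤ y → (0 ≤ γQ y ↔ 0 ≤ γ q y) := fun y hey =>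
    ⟨fun h => (hlink y).1 h q hq, fun h => (hlink y).2 fun r _ => by
      by_cases hrq : r = q
      · exact hrq ▸ h
      · exact hup r hey ((he r).2 hrq)⟩
  have hsign := nonneg_iff_of_forall_le_nonneg_iff hγQ hγq hw hv hQe hqe habove f
  exact (hf p).1 ((hlink f).1 (hsign.2 ((hf q).2 (Ne.symm hpq))) p hp) rfl
end
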